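/- arXiv:2411.19164 — 3 statements merged into one kernel-verified Lean document; each statement's English description precedes it below -/
import Mathlib

section
/- Let α > 1/2, let γ = (γ_j)_{j≥1} ∈ (0,1]^ℕ, let d ∈ ℕ, and let λ ∈ [1/2, α). For the product weights γ_u = ∏_{j∈u} γ_j one has V_d(α/λ, γ^{1/λ}) = −1 + ∏_{j=1}^{d} (1 + 2 γ_j^{1/λ} ζ(α/λ)) ≤ exp( 2 ζ(α/λ) · (Σ_{j=1}^{d} γ_j^{1/α})^{α/λ} ). In particular, if Σ_{j≥1} γ_j^{1/α} < ∞, then V_d(α/λ, γ^{1/λ}) is bounded above uniformly in d. -/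
open scoped BigOperators Classical

noncomputable section

/-- Real Riemann zeta value `ζ(β) = Σ_{k≥1} k^{-β}` (for `β > 1`). -/
def zetaR (β : ℝ) : ℝ := ∑' k : ℕ, ((k + 1 : ℝ)) ^ (-β)

/-- Support of a frequency vector. -/
def suppF {d : ℕ} (h : Fin d → ℤ) : Finset (Fin d) := Finset.univ.filter (fun j => h j ≠ 0)

/-- The Korobov weight function `r_{d,α,γ}`. -/
def rKor (d : ℕ) (α : ℝ) (γ : Finset (Fin d) → ℝ) (h : Fin d → ℤ) : ℝ :=
  if h = 0 then 1 else (γ (suppF h))⁻¹ * ∏ j ∈ suppF h, |(h j : ℝ)| ^ α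

/-- `V_d(β, γ) = Σ_{∅ ≠ u ⊆ {1,…,d}} γ_u (2ζ(β))^{|u|}`. -/
def Vd (d : ℕ) (β : ℝ) (γ : Finset (Fin d) → ℝ) : ℝ :=
  ∑ u ∈ Finset.univ.filter (fun u : Finset (Fin d) => u.Nonempty), γ u * (2 * zetaR β) ^ u.card

/-- The set of generating vectors `{1,…,p-1}^d`. -/
def genSet (d p : ℕ) : Finset (Fin d → ℤ) :=
  Fintype.piFinset (fun _ => Finset.Icc (1 : ℤ) ((p : ℤ) - 1))

/-- Nonzero dual lattice points: `h ≠ 0` with `h·z ≡ 0 (mod p)`. -/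
def dualLat (d p : ℕ) (z : Fin d → ℤ) : Set (Fin d → ℤ) :=
  {h | h ≠ 0 ∧ (p : ℤ) ∣ ∑ j, h j * z j}

/-- Worst-case error of the lattice rule `Q_p^z` on the Korobov class. -/
def Edet (d : ℕ) (α : ℝ) (γ : Finset (Fin d) → ℝ) (p : ℕ) (z : Fin d → ℤ) : ℝ :=
  Real.sqrt (∑' h : dualLat d p z, ((rKor d α γ h.1) ^ 2)⁻¹)

/-- Quadrature error of the lattice rule `Q_p^z` on the function with
Fourier coefficients `a`. -/
def err (d p : ℕ) (z : Fin d → ℤ) (a : (Fin d → ℤ) → ℂ) : ℂ :=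
  ∑' h : dualLat d p z, a h.1

/-- The Korobov norm of the coefficient sequence `a`. -/
def korNorm (d : ℕ) (α : ℝ) (γ : Finset (Fin d) → ℝ) (a : (Fin d → ℤ) → ℂ) : ℝ :=
  Real.sqrt (∑' h : Fin d → ℤ, (rKor d α γ h) ^ 2 * ‖a h‖ ^ 2)

/-- Membership of the coefficient sequence in the Korobov class (`‖a‖ < ∞`). -/
def korSummable (d : ℕ) (α : ℝ) (γ : Finset (Fin d) → ℝ) (a : (Fin d → ℤ) → ℂ) : Prop :=
  Summable (fun h : Fin d → ℤ => (rKor d α γ h) ^ 2 * ‖a h‖ ^ 2)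

/-- The median (the `(N+1)/2`-th smallest value for odd `N`). -/
def medianR {N : ℕ} (f : Fin N → ℝ) : ℝ :=
  (List.insertionSort (· ≤ ·) (List.ofFn f)).getD ((N - 1) / 2) 0

/-- The median of complex numbers: medians of real and imaginary parts. -/
def medianC {N : ℕ} (f : Fin N → ℂ) : ℂ :=
  (medianR fun k => (f k).re) + (medianR fun k => (f k).im) * Complex.I

/-- The set `P_n` of primes `p` with `⌈n/2⌉ + 1 ≤ p ≤ n`. -/
def Pset (n : ℕ) : Finset ℕ := (Finset.Icc ((n + 1) / 2 + 1) n).filter Nat.Prime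

/-- The sample space of a single draw: pairs `(p, z)` with `p ∈ P_n`,
`z ∈ {1,…,p-1}^d`. -/
def allPairs (n d : ℕ) : Finset ((_ : ℕ) × (Fin d → ℤ)) :=
  (Pset n).sigma (fun p => genSet d p)

/-- The probability of one pair `(p,z)`: `p` uniform on `P_n`, and given `p`,
`z` uniform on `{1,…,p-1}^d`. -/
def pairWeight (n d : ℕ) (pz : (_ : ℕ) × (Fin d → ℤ)) : ℝ :=
  (((Pset n).card : ℝ))⁻¹ * (((pz.1 : ℝ) - 1) ^ d)⁻¹

/-- Number of repetitions used by the median algorithm `M_n`. -/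
def numReps (h : ℕ → ℝ) (n : ℕ) : ℕ := 2 * ⌈h n * Real.logb 2 n⌉₊ + 1

/-- Expectation, over the `N` independent draws of the median algorithm,
of a function `g` of the draws. -/
def expDraws (n d N : ℕ) (g : (Fin N → (_ : ℕ) × (Fin d → ℤ)) → ℝ) : ℝ :=
  ∑ ω ∈ Fintype.piFinset (fun _ : Fin N => allPairs n d),
    (∏ k, pairWeight n d (ω k)) * g ω

/-- Product weights `γ_u = ∏_{j ∈ u} γ_j`. -/
def prodW (d : ℕ) (γ : ℕ → ℝ) : Finset (Fin d) → ℝ := fun u => ∏ j ∈ u, γ (j : ℕ)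

/-!
For product weights `V_d` is an expanded product `∏ (1 + x_j) - 1`, and `1 + x ≤ eˣ` bounds it
by `exp (Σ x_j)`. Since `α / λ ≥ 1`, superadditivity `Σ aⱼ^{α/λ} ≤ (Σ aⱼ)^{α/λ}` applied to
`aⱼ = γⱼ^{1/α}` turns `Σ γⱼ^{1/λ}` into `(Σ γⱼ^{1/α})^{α/λ}`, which is bounded uniformly in `d`
once `Σ γⱼ^{1/α}` converges.
-/

open Finset Real

lemma zetaR_nonneg (β : ℝ) : 0 ≤ zetaR β :=
  tsum_nonneg fun _ => by positivity

lemma Finset.sum_rpow_le_rpow_sum {ι : Type*} (s : Finset ι) {f : ι → ℝ}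
    (hf : ∀ i ∈ s, 0 ≤ f i) {p : ℝ} (hp : 1 ≤ p) :
    ∑ i ∈ s, f i ^ p ≤ (∑ i ∈ s, f i) ^ p := by
  set S := ∑ i ∈ s, f i
  have rpow_eq {x : ℝ} (hx : 0 ≤ x) : x ^ p = x ^ (p - 1) * x := by
    conv_lhs => rw [← sub_add_cancel p 1, rpow_add' hx (by linarith), rpow_one]
  calc ∑ i ∈ s, f i ^ p = ∑ i ∈ s, f i ^ (p - 1) * f i :=
        sum_congr rfl fun i hi => rpow_eq (hf i hi)
    _ ≤ ∑ i ∈ s, S ^ (p - 1) * f i := sum_le_sum fun i hi =>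
        mul_le_mul_of_nonneg_right
          (rpow_le_rpow (hf i hi) (single_le_sum hf hi) (by linarith)) (hf i hi)
    _ = S ^ p := by rw [← mul_sum, rpow_eq (sum_nonneg hf)]

lemma Vd_prod_eq (d : ℕ) (β : ℝ) (w : Fin d → ℝ) :
    Vd d β (fun u => ∏ j ∈ u, w j) = -1 + ∏ j, (1 + 2 * w j * zetaR β) := by
  have hfilter : univ.filter (fun u : Finset (Fin d) => u.Nonempty) = univ.erase ∅ := by
    ext u; simp [nonempty_iff_ne_empty]
  have hterm (u : Finset (Fin d)) :
      (∏ j ∈ u, w j) * (2 * zetaR β) ^ u.card = ∏ j ∈ u, (2 * w j * zetaR β) := by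
    rw [← prod_const, ← prod_mul_distrib]
    exact prod_congr rfl fun _ _ => by ring
  rw [Vd, hfilter, sum_erase_eq_sub (mem_univ _), prod_one_add, powerset_univ]
  simp only [hterm, prod_empty, card_empty, pow_zero, mul_one]
  ring

lemma Vd_prod_le_exp (d : ℕ) (β : ℝ) {w : Fin d → ℝ} (hw : ∀ j, 0 ≤ w j) :
    Vd d β (fun u => ∏ j ∈ u, w j) ≤ exp (2 * zetaR β * ∑ j, w j) := by
  have hζ := zetaR_nonneg β
  rw [Vd_prod_eq, mul_sum]
  calc -1 + ∏ j, (1 + 2 * w j * zetaR β) ≤ ∏ j, (1 + 2 * w j * zetaR β) := by linarith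
    _ ≤ exp (∑ j, 2 * w j * zetaR β) := prod_one_add_le_exp_sum _ fun j => by
        have := hw j; positivity
    _ = exp (∑ j, 2 * zetaR β * w j) := by simp only [mul_right_comm _ (zetaR β)]

lemma prodW_rpow {γ : ℕ → ℝ} (hγ : ∀ j, 0 ≤ γ j) (d : ℕ) (u : Finset (Fin d)) (r : ℝ) :
    prodW d γ u ^ r = ∏ j ∈ u, γ j ^ r :=
  (finsetProd_rpow u _ (fun j _ => hγ j) r).symm

lemma Vd_prodW_rpow_le_exp {γ : ℕ → ℝ} (hγ : ∀ j, 0 ≤ γ j) (d : ℕ) {α lam : ℝ}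
    (hlam : 0 < lam) (hlamα : lam ≤ α) :
    Vd d (α / lam) (fun u => prodW d γ u ^ (1 / lam)) ≤
      exp (2 * zetaR (α / lam) * (∑ j : Fin d, γ j ^ (1 / α)) ^ (α / lam)) := by
  have hα : 0 < α := hlam.trans_le hlamα
  have hγ_rpow (j : ℕ) : γ j ^ (1 / lam) = (γ j ^ (1 / α)) ^ (α / lam) := by
    rw [← rpow_mul (hγ j)]
    field_simp
  have hsum : ∑ j : Fin d, γ j ^ (1 / lam) ≤ (∑ j : Fin d, γ j ^ (1 / α)) ^ (α / lam) := by
    simp only [hγ_rpow]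
    exact sum_rpow_le_rpow_sum (f := fun j : Fin d => γ j ^ (1 / α)) _ (fun j _ => rpow_nonneg (hγ j) _)
      ((one_le_div hlam).mpr hlamα)
  simp only [prodW_rpow hγ]
  refine (Vd_prod_le_exp d _ fun j => rpow_nonneg (hγ j) _).trans ?_
  have := zetaR_nonneg (α / lam)
  gcongr

theorem stmt_8_general (α : ℝ) (γ : ℕ → ℝ) (hγ : ∀ j, γ j ∈ Set.Ioc (0 : ℝ) 1)
    (d : ℕ) (lam : ℝ) (hlam : lam ∈ Set.Ico (1 / 2 : ℝ) α) :
    Vd d (α / lam) (fun u => prodW d γ u ^ (1 / lam)) =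
        -1 + ∏ j : Fin d, (1 + 2 * γ (j : ℕ) ^ (1 / lam) * zetaR (α / lam)) ∧
    Vd d (α / lam) (fun u => prodW d γ u ^ (1 / lam)) ≤
        Real.exp (2 * zetaR (α / lam) * (∑ j : Fin d, γ (j : ℕ) ^ (1 / α)) ^ (α / lam)) ∧
    (Summable (fun j => γ j ^ (1 / α)) →
      ∃ B : ℝ, ∀ d' : ℕ, Vd d' (α / lam) (fun u => prodW d' γ u ^ (1 / lam)) ≤ B) := by
  have hγ0 (j : ℕ) : 0 ≤ γ j := (hγ j).1.le
  have hlam0 : 0 < lam := lt_of_lt_of_le (by norm_num) hlam.1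
  have hbound (d' : ℕ) := Vd_prodW_rpow_le_exp hγ0 d' hlam0 hlam.2.le
  refine ⟨by simp only [prodW_rpow hγ0, Vd_prod_eq], hbound d, fun hs => ?_⟩
  refine ⟨exp (2 * zetaR (α / lam) * (∑' j, γ j ^ (1 / α)) ^ (α / lam)),
    fun d' => (hbound d').trans ?_⟩
  have hpartial : ∑ j : Fin d', γ j ^ (1 / α) ≤ ∑' j, γ j ^ (1 / α) := by
    rw [Fin.sum_univ_eq_sum_range (fun j => γ j ^ (1 / α))]
    exact hs.sum_le_tsum _ fun j _ => rpow_nonneg (hγ0 j) _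
  have := zetaR_nonneg (α / lam)
  have := hlam0.trans hlam.2
  gcongr
  exact sum_nonneg fun j _ => rpow_nonneg (hγ0 j) _

/-- behaviour of `V_d` for product weights. -/
theorem stmt_8 (α : ℝ) (hα : 1 / 2 < α) (γ : ℕ → ℝ) (hγ : ∀ j, γ j ∈ Set.Ioc (0 : ℝ) 1)
    (d : ℕ) (lam : ℝ) (hlam : lam ∈ Set.Ico (1 / 2 : ℝ) α) :
    Vd d (α / lam) (fun u => prodW d γ u ^ (1 / lam)) =
        -1 + ∏ j : Fin d, (1 + 2 * γ (j : ℕ) ^ (1 / lam) * zetaR (α / lam)) ∧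
    Vd d (α / lam) (fun u => prodW d γ u ^ (1 / lam)) ≤
        Real.exp (2 * zetaR (α / lam) * (∑ j : Fin d, γ (j : ℕ) ^ (1 / α)) ^ (α / lam)) ∧
    (Summable (fun j => γ j ^ (1 / α)) →
      ∃ B : ℝ, ∀ d' : ℕ, Vd d' (α / lam) (fun u => prodW d' γ u ^ (1 / lam)) ≤ B) :=
  stmt_8_general α γ hγ d lam hlam

end
end

section
/- Let N be an odd natural number, let X_1,…,X_N be independent complex-valued random variables, let c ∈ ℂ and R ≥ 0, and suppose P(|X_i − c| > R) ≤ 1/8 for every i. Then P(|median_ℂ{X_1,…,X_N} − c| > √2·R) ≤ 2^{−N/2}. -/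
open scoped BigOperators Classical

noncomputable section

/-!
If the complex median is farther than `√2 R` from `c`, then its real or its imaginary part is
farther than `R` from that of `c`. A median of reals exceeds `t` (or lies below `t`) only if at
least `(N + 1) / 2` of the samples do, so at least `(N + 1) / 2` of the `X i` are farther than `R`
from `c`. By independence and a union bound over the subsets of that size, this has probability at
most `C(N, (N + 1) / 2) 8^{-(N + 1) / 2} ≤ 2^N 8^{-(N + 1) / 2} ≤ 2^{-N / 2}`.
-/

open scoped ENNReal
open Finset MeasureTheory ProbabilityTheory

theorem List.Pairwise.length_sub_le_countP_lt {α : Type*} [Preorder α] {l : List α}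
    (hl : l.Pairwise (· ≤ ·)) {k : ℕ} (hk : k < l.length) {t : α} (ht : t < l[k]) :
    l.length - k ≤ l.countP (t < ·) := by
  have hdrop : ∀ x ∈ l.drop k, t < x := by
    have hsorted := hl.drop (i := k)
    rw [List.drop_eq_getElem_cons hk, List.pairwise_cons] at hsorted
    rw [List.drop_eq_getElem_cons hk]
    rintro x (_ | ⟨_, hx⟩)
    exacts [ht, ht.trans_le (hsorted.1 x hx)]
  calc l.length - k = (l.drop k).length := List.length_drop.symm
    _ = (l.drop k).countP (t < ·) := (List.countP_eq_length.2 (by simpa using hdrop)).symm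
    _ ≤ l.countP (t < ·) := (List.drop_sublist k l).countP_le

theorem List.Pairwise.succ_le_countP_gt {α : Type*} [Preorder α] {l : List α}
    (hl : l.Pairwise (· ≤ ·)) {k : ℕ} (hk : k < l.length) {t : α} (ht : l[k] < t) :
    k + 1 ≤ l.countP (· < t) := by
  have htake : ∀ x ∈ l.take (k + 1), x < t := by
    have hsorted := hl.take (i := k + 1)
    rw [← List.take_concat_get' l k hk, List.pairwise_append] at hsorted
    rw [← List.take_concat_get' l k hk]
    intro x hx
    rcases List.mem_append.1 hx with hx | hx
    · exact (hsorted.2.2 x hx _ (List.mem_singleton_self _)).trans_lt ht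
    · rwa [List.mem_singleton.1 hx]
  calc k + 1 = (l.take (k + 1)).length := by simp [hk]
    _ = (l.take (k + 1)).countP (· < t) := (List.countP_eq_length.2 (by simpa using htake)).symm
    _ ≤ l.countP (· < t) := (List.take_sublist _ l).countP_le

theorem List.countP_ofFn {α : Type*} {N : ℕ} (f : Fin N → α) (p : α → Prop)
    [DecidablePred p] :
    (List.ofFn f).countP p = #{i | p (f i)} := by
  rw [← Multiset.coe_countP, ← Fin.univ_val_map, Multiset.countP_map]
  rfl

section Median

variable {N : ℕ} (f : Fin N → ℝ)

theorem medianR_eq_getElem (hN : 0 < N) :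
    medianR f = (List.insertionSort (· ≤ ·) (List.ofFn f))[(N - 1) / 2]'
      (by rw [List.length_insertionSort, List.length_ofFn]; omega) :=
  List.getD_eq_getElem _ _ _

theorem countP_insertionSort_ofFn (p : ℝ → Prop) [DecidablePred p] :
    (List.insertionSort (· ≤ ·) (List.ofFn f)).countP p = #{i | p (f i)} := by
  rw [(List.perm_insertionSort _ _).countP_eq, List.countP_ofFn]

theorem le_card_lt_of_lt_medianR {t : ℝ} (h : t < medianR f) :
    (N + 1) / 2 ≤ #{i | t < f i} := by
  rcases Nat.eq_zero_or_pos N with rfl | hN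
  · simp
  rw [medianR_eq_getElem f hN] at h
  have := (List.pairwise_insertionSort _ _).length_sub_le_countP_lt _ h
  rw [countP_insertionSort_ofFn, List.length_insertionSort, List.length_ofFn] at this
  omega

theorem le_card_gt_of_medianR_lt {t : ℝ} (h : medianR f < t) :
    (N + 1) / 2 ≤ #{i | f i < t} := by
  rcases Nat.eq_zero_or_pos N with rfl | hN
  · simp
  rw [medianR_eq_getElem f hN] at h
  have := (List.pairwise_insertionSort _ _).succ_le_countP_gt _ h
  rw [countP_insertionSort_ofFn] at this
  omega

theorem le_card_lt_abs_sub_of_lt_abs_medianR_sub {a R : ℝ} (h : R < |medianR f - a|) :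
    (N + 1) / 2 ≤ #{i | R < |f i - a|} := by
  rcases lt_abs.1 h with h | h
  · refine (le_card_lt_of_lt_medianR f (t := a + R) (by linarith)).trans
      (card_le_card fun i hi => ?_)
    simp only [mem_filter, mem_univ, true_and] at hi ⊢
    exact lt_abs.2 (Or.inl (by linarith))
  · refine (le_card_gt_of_medianR_lt f (t := a - R) (by linarith)).trans
      (card_le_card fun i hi => ?_)
    simp only [mem_filter, mem_univ, true_and] at hi ⊢
    exact lt_abs.2 (Or.inr (by linarith))

theorem le_card_lt_norm_sub_of_sqrt_two_mul_lt_norm_medianC_sub (w : Fin N → ℂ) {c : ℂ}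
    {R : ℝ} (h : √2 * R < ‖medianC w - c‖) : (N + 1) / 2 ≤ #{i | R < ‖w i - c‖} := by
  have hmax : R < max |(medianC w - c).re| |(medianC w - c).im| :=
    lt_of_mul_lt_mul_left (h.trans_le (Complex.norm_le_sqrt_two_mul_max _)) (Real.sqrt_nonneg 2)
  rcases lt_max_iff.1 hmax with h | h
  · simp only [medianC] at h
    refine (le_card_lt_abs_sub_of_lt_abs_medianR_sub _ (by simpa using h)).trans
      (card_le_card fun i hi => ?_)
    simp only [mem_filter, mem_univ, true_and] at hi ⊢
    exact hi.trans_le (by simpa using Complex.abs_re_le_norm (w i - c))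
  · simp only [medianC] at h
    refine (le_card_lt_abs_sub_of_lt_abs_medianR_sub _ (by simpa using h)).trans
      (card_le_card fun i hi => ?_)
    simp only [mem_filter, mem_univ, true_and] at hi ⊢
    exact hi.trans_le (by simpa using Complex.abs_im_le_norm (w i - c))

end Median

theorem ProbabilityTheory.iIndepFun.measure_le_card_filter_mem_le {Ω ι β : Type*}
    [MeasurableSpace Ω] [MeasurableSpace β] [Fintype ι] {μ : Measure Ω} {X : ι → Ω → β}
    (hX : iIndepFun X μ) {B : Set β} (hB : MeasurableSet B) {p : ℝ≥0∞}
    (hp : ∀ i, μ (X i ⁻¹' B) ≤ p) (m : ℕ) :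
    μ {ω | m ≤ #{i | X i ω ∈ B}} ≤ (Fintype.card ι).choose m * p ^ m := by
  have hcover : {ω | m ≤ #{i | X i ω ∈ B}} ⊆
      ⋃ T ∈ powersetCard m (univ : Finset ι), ⋂ i ∈ T, X i ⁻¹' B := by
    intro ω hω
    obtain ⟨T, hT, hTcard⟩ := exists_subset_card_eq hω
    simp only [Set.mem_iUnion, Set.mem_iInter]
    exact ⟨T, mem_powersetCard_univ.2 hTcard, fun i hi => (mem_filter.1 (hT hi)).2⟩
  calc μ {ω | m ≤ #{i | X i ω ∈ B}}
      ≤ ∑ T ∈ powersetCard m (univ : Finset ι), μ (⋂ i ∈ T, X i ⁻¹' B) :=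
        (measure_mono hcover).trans (measure_biUnion_finset_le _ _)
    _ ≤ ∑ T ∈ powersetCard m (univ : Finset ι), p ^ m := by
        refine sum_le_sum fun T hT => ?_
        rw [hX.meas_biInter fun i _ => ⟨B, hB, rfl⟩, ← (mem_powersetCard_univ.1 hT)]
        exact prod_le_pow_card _ _ _ fun i _ => hp i
    _ = (Fintype.card ι).choose m * p ^ m := by
        rw [sum_const, card_powersetCard, card_univ, nsmul_eq_mul]

theorem choose_half_succ_mul_one_div_eight_pow_le {N : ℕ} (hN : Odd N) :
    (N.choose ((N + 1) / 2) : ℝ) * (1 / 8) ^ ((N + 1) / 2) ≤ 2 ^ (-(N : ℝ) / 2) := by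
  obtain ⟨k, rfl⟩ := hN
  have hm : (2 * k + 1 + 1) / 2 = k + 1 := by omega
  rw [hm]
  have hchoose : ((2 * k + 1).choose (k + 1) : ℝ) ≤ 2 ^ (2 * k + 1) := by
    exact_mod_cast Nat.choose_le_two_pow _ _
  calc ((2 * k + 1).choose (k + 1) : ℝ) * (1 / 8) ^ (k + 1)
      ≤ 2 ^ (2 * k + 1) * (1 / 8) ^ (k + 1) := by gcongr
    _ = 2 ^ (-((2 * k + 1 : ℕ) : ℝ) / 2) * 2 ^ (-(3 / 2 : ℝ)) := by
        rw [← Real.rpow_add two_pos,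
          show -((2 * k + 1 : ℕ) : ℝ) / 2 + -(3 / 2) = -((k + 2 : ℕ) : ℝ) by push_cast; ring,
          Real.rpow_neg zero_le_two, Real.rpow_natCast,
          show (1 / 8 : ℝ) = (2 ^ 3)⁻¹ by norm_num, inv_pow, ← pow_mul]
        field_simp
        ring
    _ ≤ 2 ^ (-((2 * k + 1 : ℕ) : ℝ) / 2) := by
        refine mul_le_of_le_one_right (by positivity) ?_
        exact Real.rpow_le_one_of_one_le_of_nonpos (by norm_num) (by norm_num)

theorem stmt_14_general {Ω : Type*} [MeasurableSpace Ω] (μ : MeasureTheory.Measure Ω)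
    (N : ℕ) (hN : Odd N)
    (X : Fin N → Ω → ℂ)
    (hind : ProbabilityTheory.iIndepFun X μ)
    (c : ℂ) (R : ℝ)
    (hb : ∀ i, μ {ω | R < ‖X i ω - c‖} ≤ 1 / 8) :
    μ {ω | Real.sqrt 2 * R < ‖medianC (fun i => X i ω) - c‖} ≤
      ENNReal.ofReal ((2 : ℝ) ^ (-(N : ℝ) / 2)) := by
  have hB : MeasurableSet {z : ℂ | R < ‖z - c‖} :=
    measurableSet_lt measurable_const (by fun_prop)
  calc μ {ω | Real.sqrt 2 * R < ‖medianC (fun i => X i ω) - c‖}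
      ≤ μ {ω | (N + 1) / 2 ≤ #{i | X i ω ∈ {z : ℂ | R < ‖z - c‖}}} :=
        measure_mono fun ω => le_card_lt_norm_sub_of_sqrt_two_mul_lt_norm_medianC_sub _
    _ ≤ (N.choose ((N + 1) / 2) : ℝ≥0∞) * (1 / 8) ^ ((N + 1) / 2) := by
        simpa using hind.measure_le_card_filter_mem_le hB hb ((N + 1) / 2)
    _ = ENNReal.ofReal ((N.choose ((N + 1) / 2) : ℝ) * (1 / 8) ^ ((N + 1) / 2)) := by
        rw [ENNReal.ofReal_mul (by positivity), ENNReal.ofReal_natCast,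
          ENNReal.ofReal_pow (by norm_num), ENNReal.ofReal_div_of_pos (by norm_num)]
        simp
    _ ≤ ENNReal.ofReal ((2 : ℝ) ^ (-(N : ℝ) / 2)) :=
        ENNReal.ofReal_le_ofReal (choose_half_succ_mul_one_div_eight_pow_le hN)

/-- the median trick for complex random variables. -/
theorem stmt_14 {Ω : Type*} [MeasurableSpace Ω] (μ : MeasureTheory.Measure Ω)
    [MeasureTheory.IsProbabilityMeasure μ] (N : ℕ) (hN : Odd N)
    (X : Fin N → Ω → ℂ) (hXm : ∀ i, Measurable (X i))
    (hind : ProbabilityTheory.iIndepFun X μ)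
    (c : ℂ) (R : ℝ) (hR : 0 ≤ R)
    (hb : ∀ i, μ {ω | R < ‖X i ω - c‖} ≤ 1 / 8) :
    μ {ω | Real.sqrt 2 * R < ‖medianC (fun i => X i ω) - c‖} ≤
      ENNReal.ofReal ((2 : ℝ) ^ (-(N : ℝ) / 2)) :=
  stmt_14_general μ N hN X hind c R hb
end
end

section
/- Let p be a prime, d ∈ ℕ, τ ∈ (0,1), α > 1/2, and let γ = (γ_u) be weights with 0 < γ_u ≤ 1. Then there exists a subset Z ⊆ {1,…,p−1}^d with |Z| ≥ ⌈τ(p−1)^d⌉ such that for every z ∈ Z, every λ ∈ [1/2, α), and every h ∈ ℤ^d∖{0} with h·z ≡ 0 (mod p), one has r_{d,α,γ}(h) ≥ ( (1−τ)(p−1) / (2 V_d(α/λ, γ^{1/λ})) )^{λ}. -/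
open scoped BigOperators Classical

noncomputable section

/-!
Fix `λ ∈ (0, α)` and let `t = ((1 - τ)(p - 1) / (2V))^λ` with `V = V_d(α/λ, γ^{1/λ})`. If a
nonzero `h` with `r(h) < t` lies in the dual lattice of `z`, then `h` has a coordinate prime to
`p` (otherwise `r(h) ≥ γ_u⁻¹ p^α ≥ t`), so it lies in the dual lattice of at most `(p - 1)^{d-1}`
vectors `z`. Since `Σ_{h ≠ 0} r(h)^{-1/λ} ≤ V`, Markov's inequality leaves at most
`t^{1/λ} V = (1 - τ)(p - 1)/2` such `h`, so all but `(1 - τ)(p - 1)^d / 2` vectors `z` have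
`r(h) ≥ t` on their whole dual lattice.

These good sets shrink as `t` grows, so over `λ ∈ [1/2, α)` they form a chain of finite sets, and
one of least cardinality is contained in all the others.
-/

open Finset

lemma Finset.exists_forall_subset_of_total {ι α : Type*} {F : ι → Finset α}
    (hF : ∀ i j, F i ⊆ F j ∨ F j ⊆ F i) {s : Set ι} (hs : s.Nonempty) :
    ∃ i₀ ∈ s, ∀ i ∈ s, F i₀ ⊆ F i := by
  obtain ⟨i₀, hi₀, hmin⟩ := exists_minimalFor_of_wellFoundedLT (· ∈ s) (fun i => #(F i)) hs
  refine ⟨i₀, hi₀, fun i hi => ?_⟩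
  rcases hF i₀ i with hsub | hsub
  · exact hsub
  · rw [eq_of_subset_of_card_le hsub (hmin hi (card_le_card hsub))]

lemma summable_nat_add_one_rpow_neg {β : ℝ} (hβ : 1 < β) :
    Summable fun n : ℕ => ((n : ℝ) + 1) ^ (-β) := by
  have := (summable_nat_add_iff 1).2 (Real.summable_nat_rpow.2 (neg_lt_neg hβ))
  exact this.congr fun n => by push_cast; rfl

lemma tsum_abs_int_rpow_neg {β : ℝ} (hβ : 1 < β) :
    ∑' k : ℤ, |(k : ℝ)| ^ (-β) = 2 * zetaR β := by
  have hsum := Real.summable_abs_int_rpow hβ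
  have hnat : ∀ n : ℕ, |((n : ℤ) : ℝ)| ^ (-β) = (n : ℝ) ^ (-β) := fun n => by
    rw [Int.cast_natCast, abs_of_nonneg n.cast_nonneg]
  have hneg : ∀ n : ℕ, |((-((n : ℤ) + 1) : ℤ) : ℝ)| ^ (-β) = ((n : ℝ) + 1) ^ (-β) := fun n => by
    push_cast
    rw [abs_neg, abs_of_nonneg (by positivity)]
  rw [tsum_of_nat_of_neg_add_one (f := fun k : ℤ => |(k : ℝ)| ^ (-β))
    (hsum.comp_injective Nat.cast_injective)
    ((summable_nat_add_one_rpow_neg hβ).congr fun n => (hneg n).symm)]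
  simp only [hnat, hneg]
  -- the `k = 0` term vanishes: Lean's `rpow` has `0 ^ x = 0` for `x ≠ 0`
  rw [(Real.summable_nat_rpow.2 (neg_lt_neg hβ)).tsum_eq_zero_add]
  simp only [Nat.cast_zero, Real.zero_rpow (neg_ne_zero.2 (by linarith : β ≠ 0)), zero_add,
    Nat.cast_succ, zetaR]
  ring

lemma sum_abs_int_rpow_neg_le {β : ℝ} (hβ : 1 < β) (s : Finset ℤ) :
    ∑ k ∈ s, |(k : ℝ)| ^ (-β) ≤ 2 * zetaR β :=
  tsum_abs_int_rpow_neg hβ ▸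
    (Real.summable_abs_int_rpow hβ).sum_le_tsum s fun k _ => by positivity

lemma one_le_zetaR {β : ℝ} (hβ : 1 < β) : 1 ≤ zetaR β := by
  unfold zetaR
  simpa using (summable_nat_add_one_rpow_neg hβ).le_tsum 0 fun n _ => by positivity

section KorobovWeight

variable {d : ℕ} {α : ℝ} {γ : Finset (Fin d) → ℝ}

lemma mem_suppF {h : Fin d → ℤ} {j : Fin d} : j ∈ suppF h ↔ h j ≠ 0 := by
  simp [suppF]

lemma suppF_nonempty {h : Fin d → ℤ} (hh : h ≠ 0) : (suppF h).Nonempty := by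
  obtain ⟨j, hj⟩ := Function.ne_iff.1 hh
  exact ⟨j, mem_suppF.2 hj⟩

lemma rKor_of_ne_zero {h : Fin d → ℤ} (hh : h ≠ 0) :
    rKor d α γ h = (γ (suppF h))⁻¹ * ∏ j ∈ suppF h, |(h j : ℝ)| ^ α :=
  if_neg hh

lemma rKor_pos (hγ : ∀ u : Finset (Fin d), u.Nonempty → 0 < γ u) (h : Fin d → ℤ) :
    0 < rKor d α γ h := by
  by_cases hh : h = 0
  · simp [rKor, hh]
  · have := hγ _ (suppF_nonempty hh)
    rw [rKor_of_ne_zero hh]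
    exact mul_pos (by positivity) (prod_pos fun j hj =>
      Real.rpow_pos_of_pos (abs_pos.2 (Int.cast_ne_zero.2 (mem_suppF.1 hj))) _)

lemma inv_mul_rpow_le_rKor (hα : 0 ≤ α) (hγ : ∀ u : Finset (Fin d), u.Nonempty → 0 < γ u)
    {h : Fin d → ℤ} {j : Fin d} (hj : j ∈ suppF h) :
    (γ (suppF h))⁻¹ * |(h j : ℝ)| ^ α ≤ rKor d α γ h := by
  have hh : h ≠ 0 := fun h0 => mem_suppF.1 hj (by simp [h0])
  have hγu := hγ _ (suppF_nonempty hh)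
  rw [rKor_of_ne_zero hh]
  gcongr
  calc |(h j : ℝ)| ^ α = ∏ i ∈ {j}, |(h i : ℝ)| ^ α := (prod_singleton _ _).symm
    _ ≤ ∏ i ∈ suppF h, |(h i : ℝ)| ^ α := by
      refine prod_le_prod_of_subset_of_one_le (singleton_subset_iff.2 hj)
        (fun i _ => by positivity) fun i hi _ => Real.one_le_rpow ?_ hα
      exact_mod_cast Int.one_le_abs (mem_suppF.1 hi)

lemma abs_rpow_le_rKor (hα : 0 ≤ α)
    (hγ : ∀ u : Finset (Fin d), u.Nonempty → 0 < γ u ∧ γ u ≤ 1)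
    {h : Fin d → ℤ} {j : Fin d} (hj : j ∈ suppF h) :
    |(h j : ℝ)| ^ α ≤ rKor d α γ h := by
  refine le_trans ?_ (inv_mul_rpow_le_rKor hα (fun u hu => (hγ u hu).1) hj)
  obtain ⟨hγ0, hγ1⟩ := hγ _ ⟨j, hj⟩
  exact le_mul_of_one_le_left (by positivity) (one_le_inv₀ hγ0 |>.2 hγ1)

lemma inv_rKor_rpow_inv {lam : ℝ} (hγ : ∀ u : Finset (Fin d), u.Nonempty → 0 < γ u)
    {h : Fin d → ℤ} (hh : h ≠ 0) :
    (rKor d α γ h ^ (1 / lam))⁻¹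
      = γ (suppF h) ^ (1 / lam) * ∏ j ∈ suppF h, |(h j : ℝ)| ^ (-(α / lam)) := by
  have hγu := (hγ _ (suppF_nonempty hh)).le
  rw [rKor_of_ne_zero hh, Real.mul_rpow (by positivity) (by positivity), mul_inv,
    Real.inv_rpow hγu, inv_inv, ← Real.finsetProd_rpow _ _ (fun j _ => by positivity),
    ← prod_inv_distrib]
  congr 1
  refine prod_congr rfl fun j _ => ?_
  rw [← Real.rpow_mul (abs_nonneg _), mul_one_div, Real.rpow_neg (abs_nonneg _)]

end KorobovWeight

section DualSums

variable {d : ℕ}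

lemma sum_prod_filter_suppF_eq_le {s : Finset ℤ} {g : ℤ → ℝ} (hg : ∀ k, 0 ≤ g k)
    (u : Finset (Fin d)) :
    ∑ h ∈ (Fintype.piFinset fun _ : Fin d => s).filter (fun h => suppF h = u), ∏ j ∈ u, g (h j)
      ≤ (∑ k ∈ s, g k) ^ u.card := by
  set F := (Fintype.piFinset fun _ : Fin d => s).filter (fun h => suppF h = u)
  let restrict : (Fin d → ℤ) → (u → ℤ) := fun h j => h j
  have hvanish : ∀ h ∈ F, ∀ j ∉ u, h j = 0 := fun h hF j hj => by
    rwa [← (mem_filter.1 hF).2, mem_suppF, not_not] at hj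
  have hinj : Set.InjOn restrict F := fun h hF h' hF' heq => funext fun j => by
    by_cases hj : j ∈ u
    · exact congrFun heq ⟨j, hj⟩
    · rw [hvanish h hF j hj, hvanish h' hF' j hj]
  have himage : F.image restrict ⊆ Fintype.piFinset fun _ : u => s := by
    simp only [subset_iff, mem_image, Fintype.mem_piFinset]
    rintro _ ⟨h, hF, rfl⟩ j
    exact Fintype.mem_piFinset.1 (mem_filter.1 hF).1 j
  calc ∑ h ∈ F, ∏ j ∈ u, g (h j) = ∑ x ∈ F.image restrict, ∏ j : u, g (x j) := by
        rw [sum_image hinj]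
        exact sum_congr rfl fun h _ => (prod_coe_sort u fun j => g (h j)).symm
    _ ≤ ∑ x ∈ Fintype.piFinset fun _ : u => s, ∏ j : u, g (x j) :=
        sum_le_sum_of_subset_of_nonneg himage fun x _ _ => prod_nonneg fun j _ => hg _
    _ = (∑ k ∈ s, g k) ^ u.card := by
        rw [sum_prod_piFinset, prod_const, card_univ, Fintype.card_coe]

variable {α : ℝ} {γ : Finset (Fin d) → ℝ}

lemma sum_inv_rKor_rpow_le_Vd {lam : ℝ} (hlam : 0 < lam) (hlamα : lam < α)
    (hγ : ∀ u : Finset (Fin d), u.Nonempty → 0 < γ u) (s : Finset ℤ) :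
    ∑ h ∈ (Fintype.piFinset fun _ : Fin d => s).filter (· ≠ 0), (rKor d α γ h ^ (1 / lam))⁻¹
      ≤ Vd d (α / lam) (fun u => γ u ^ (1 / lam)) := by
  have hβ : 1 < α / lam := (one_lt_div hlam).2 hlamα
  have hmaps : ∀ h ∈ (Fintype.piFinset fun _ : Fin d => s).filter (· ≠ 0),
      suppF h ∈ univ.filter (fun u : Finset (Fin d) => u.Nonempty) := fun h hh =>
    mem_filter.2 ⟨mem_univ _, suppF_nonempty (mem_filter.1 hh).2⟩
  rw [← sum_fiberwise_of_maps_to hmaps, Vd]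
  refine sum_le_sum fun u hu => ?_
  have hγu := (hγ u (mem_filter.1 hu).2).le
  calc _ = γ u ^ (1 / lam) * ∑ h ∈ ((Fintype.piFinset fun _ : Fin d => s).filter (· ≠ 0)).filter
          (fun h => suppF h = u), ∏ j ∈ u, |(h j : ℝ)| ^ (-(α / lam)) := by
        rw [mul_sum]
        refine sum_congr rfl fun h hh => ?_
        obtain ⟨⟨-, hh0⟩, rfl⟩ := (mem_filter.1 hh).imp_left mem_filter.1
        exact inv_rKor_rpow_inv hγ hh0
    _ ≤ γ u ^ (1 / lam) * (2 * zetaR (α / lam)) ^ u.card := by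
        gcongr
        calc _ ≤ ∑ h ∈ (Fintype.piFinset fun _ : Fin d => s).filter (fun h => suppF h = u),
                ∏ j ∈ u, |(h j : ℝ)| ^ (-(α / lam)) :=
              sum_le_sum_of_subset_of_nonneg (fun h hh => by simp_all) fun h _ _ => by positivity
          _ ≤ (∑ k ∈ s, |(k : ℝ)| ^ (-(α / lam))) ^ u.card :=
              sum_prod_filter_suppF_eq_le (s := s) (g := fun k : ℤ => |(k : ℝ)| ^ (-(α / lam)))
                (fun k => by positivity) u
          _ ≤ _ := pow_le_pow_left₀ (sum_nonneg fun k _ => by positivity)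
              (sum_abs_int_rpow_neg_le hβ s) _

end DualSums

section SmallWeights

variable {d : ℕ} {α : ℝ} {γ : Finset (Fin d) → ℝ}

lemma card_filter_rKor_lt_le (hγ : ∀ u : Finset (Fin d), u.Nonempty → 0 < γ u) {lam T : ℝ}
    (hlam : 0 < lam) (hT : 0 ≤ T) (S : Finset (Fin d → ℤ)) :
    (#(S.filter fun h => h ≠ 0 ∧ rKor d α γ h < T ^ lam) : ℝ)
      ≤ T * ∑ h ∈ S.filter (· ≠ 0), (rKor d α γ h ^ (1 / lam))⁻¹ := by
  have hmarkov : ∀ h ∈ S.filter (fun h => h ≠ 0 ∧ rKor d α γ h < T ^ lam),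
      1 ≤ T * (rKor d α γ h ^ (1 / lam))⁻¹ := fun h hh => by
    have hr := rKor_pos (α := α) hγ h
    rw [← div_eq_mul_inv, one_le_div (by positivity), one_div]
    exact ((Real.rpow_inv_lt_iff_of_pos hr.le hT hlam).2 (mem_filter.1 hh).2.2).le
  rw [card_eq_sum_ones, Nat.cast_sum, Nat.cast_one, mul_sum]
  refine (sum_le_sum hmarkov).trans (sum_le_sum_of_subset_of_nonneg ?_ fun h _ _ => ?_)
  · exact fun h hh => by simp_all
  · have := rKor_pos (α := α) hγ h
    positivity

lemma mem_Icc_of_rKor_lt (hα : 0 < α)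
    (hγ : ∀ u : Finset (Fin d), u.Nonempty → 0 < γ u ∧ γ u ≤ 1)
    {h : Fin d → ℤ} {t : ℝ} (hr : rKor d α γ h < t) (j : Fin d) :
    h j ∈ Icc (-(⌈t ^ (1 / α)⌉₊ : ℤ)) ⌈t ^ (1 / α)⌉₊ := by
  rw [mem_Icc, ← abs_le]
  by_cases hj : h j = 0
  · simp [hj]
  have ht : 0 ≤ t := (rKor_pos (fun u hu => (hγ u hu).1) h).le.trans hr.le
  have hlt : |(h j : ℝ)| < t ^ (1 / α) := by
    rw [one_div, Real.lt_rpow_inv_iff_of_pos (abs_nonneg _) ht hα]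
    exact (abs_rpow_le_rKor hα.le hγ (mem_suppF.2 hj)).trans_lt hr
  have : (|h j| : ℝ) < ⌈t ^ (1 / α)⌉₊ := by
    exact_mod_cast hlt.trans_le (Nat.le_ceil _)
  exact_mod_cast this.le

lemma exists_not_dvd_of_rKor_lt (hα : 0 ≤ α) (hγ : ∀ u : Finset (Fin d), u.Nonempty → 0 < γ u)
    {p : ℕ} {h : Fin d → ℤ} (hh : h ≠ 0)
    (hr : rKor d α γ h < (γ (suppF h))⁻¹ * (p : ℝ) ^ α) : ∃ j, ¬ (p : ℤ) ∣ h j := by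
  by_contra! hdvd
  obtain ⟨j, hj⟩ := suppF_nonempty hh
  have hp : (p : ℝ) ≤ |(h j : ℝ)| := by
    exact_mod_cast Int.le_of_dvd (abs_pos.2 (mem_suppF.1 hj)) ((dvd_abs _ _).2 (hdvd j))
  have := (hγ _ ⟨j, hj⟩).le
  refine hr.not_ge (le_trans ?_ (inv_mul_rpow_le_rKor hα hγ hj))
  gcongr

end SmallWeights

lemma card_genSet (d p : ℕ) : #(genSet d p) = (p - 1) ^ d := by
  simp [genSet, Fintype.card_piFinset, Int.card_Icc]

def goodGenSet (d p : ℕ) (α : ℝ) (γ : Finset (Fin d) → ℝ) (t : ℝ) : Finset (Fin d → ℤ) :=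
  (genSet d p).filter fun z => ∀ h ∈ dualLat d p z, t ≤ rKor d α γ h

section GeneratingVectors

variable {d p : ℕ} {α : ℝ} {γ : Finset (Fin d) → ℝ}

lemma card_filter_dvd_le (hp : p.Prime) {h : Fin d → ℤ} {j₀ : Fin d} (hj₀ : ¬ (p : ℤ) ∣ h j₀) :
    #((genSet d p).filter fun z => (p : ℤ) ∣ ∑ j, h j * z j) ≤ (p - 1) ^ (d - 1) := by
  set F := (genSet d p).filter fun z => (p : ℤ) ∣ ∑ j, h j * z j
  let restrict : (Fin d → ℤ) → ({j // j ≠ j₀} → ℤ) := fun z j => z j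
  have hinj : Set.InjOn restrict F := by
    intro z hz z' hz' heq
    have hoff : ∀ j ≠ j₀, z j = z' j := fun j hj => congrFun heq ⟨j, hj⟩
    have hdiff : ∑ j, h j * z j - ∑ j, h j * z' j = h j₀ * (z j₀ - z' j₀) := by
      rw [← sum_sub_distrib, sum_eq_single j₀ (fun j _ hj => by rw [hoff j hj, sub_self])
        (fun h => absurd (mem_univ _) h)]
      ring
    have hdvd : (p : ℤ) ∣ z j₀ - z' j₀ := by
      refine ((Nat.prime_iff_prime_int.1 hp).dvd_mul.1 ?_).resolve_left hj₀
      exact hdiff ▸ dvd_sub (mem_filter.1 hz).2 (mem_filter.1 hz').2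
    have hbound := Fintype.mem_piFinset.1 (mem_filter.1 hz).1 j₀
    have hbound' := Fintype.mem_piFinset.1 (mem_filter.1 hz').1 j₀
    rw [mem_Icc] at hbound hbound'
    have h0 := Int.eq_zero_of_abs_lt_dvd hdvd (abs_lt.2 ⟨by omega, by omega⟩)
    funext j
    by_cases hj : j = j₀
    · subst hj; omega
    · exact hoff j hj
  have himage : F.image restrict ⊆ Fintype.piFinset fun _ => Icc 1 ((p : ℤ) - 1) := by
    simp only [subset_iff, mem_image, Fintype.mem_piFinset]
    rintro _ ⟨z, hz, rfl⟩ j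
    exact Fintype.mem_piFinset.1 (mem_filter.1 hz).1 j
  calc #F = #(F.image restrict) := (card_image_of_injOn hinj).symm
    _ ≤ _ := card_le_card himage
    _ = (p - 1) ^ (d - 1) := by
      simp [Fintype.card_piFinset, Int.card_Icc, Fintype.card_subtype_compl]

lemma goodGenSet_anti {t t' : ℝ} (htt' : t ≤ t') :
    goodGenSet d p α γ t' ⊆ goodGenSet d p α γ t :=
  monotone_filter_right _ fun _ _ hz h hh => htt'.trans (hz h hh)

lemma card_genSet_sdiff_goodGenSet_le (hp : p.Prime) {t : ℝ} {H : Finset (Fin d → ℤ)}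
    (hH : ∀ h, h ≠ 0 → rKor d α γ h < t → h ∈ H) (hndvd : ∀ h ∈ H, ∃ j, ¬ (p : ℤ) ∣ h j) :
    #(genSet d p \ goodGenSet d p α γ t) ≤ #H * (p - 1) ^ (d - 1) := by
  have hcover : genSet d p \ goodGenSet d p α γ t
      ⊆ H.biUnion fun h => (genSet d p).filter fun z => (p : ℤ) ∣ ∑ j, h j * z j := by
    intro z hz
    obtain ⟨hzgen, hzbad⟩ := mem_sdiff.1 hz
    simp only [goodGenSet, mem_filter, hzgen, true_and, not_forall, not_le] at hzbad
    obtain ⟨h, ⟨hh, hdvd⟩, hlt⟩ := hzbad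
    exact mem_biUnion.2 ⟨h, hH h hh hlt, mem_filter.2 ⟨hzgen, hdvd⟩⟩
  calc _ ≤ _ := card_le_card hcover
    _ ≤ _ := card_biUnion_le
    _ ≤ ∑ _h ∈ H, (p - 1) ^ (d - 1) := sum_le_sum fun h hh =>
        (hndvd h hh).elim fun _ hj => card_filter_dvd_le hp hj
    _ = #H * (p - 1) ^ (d - 1) := by rw [sum_const, smul_eq_mul]

end GeneratingVectors

lemma le_Vd {d : ℕ} {β : ℝ} (hβ : 1 < β) {γ : Finset (Fin d) → ℝ}
    (hγ : ∀ u : Finset (Fin d), u.Nonempty → 0 ≤ γ u) {u : Finset (Fin d)} (hu : u.Nonempty) :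
    γ u ≤ Vd d β γ := by
  have h2ζ : 1 ≤ 2 * zetaR β := by linarith [one_le_zetaR hβ]
  calc γ u ≤ γ u * (2 * zetaR β) ^ u.card := le_mul_of_one_le_right (hγ u hu) (one_le_pow₀ h2ζ)
    _ ≤ Vd d β γ := single_le_sum (f := fun u => γ u * (2 * zetaR β) ^ u.card)
        (fun v hv => mul_nonneg (hγ v (mem_filter.1 hv).2) (by positivity)) (by simpa using hu)

def korThreshold (d p : ℕ) (τ α : ℝ) (γ : Finset (Fin d) → ℝ) (lam : ℝ) : ℝ :=
  ((1 - τ) * ((p : ℝ) - 1) / (2 * Vd d (α / lam) (fun u => γ u ^ (1 / lam)))) ^ lam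

section Threshold

variable {d p : ℕ} {τ α lam : ℝ} {γ : Finset (Fin d) → ℝ}

lemma korThreshold_le_inv_mul_rpow (hp : 1 ≤ p) (hτ : τ ∈ Set.Icc (0 : ℝ) 1)
    (hγ : ∀ u : Finset (Fin d), u.Nonempty → 0 < γ u) (hlam : 0 < lam) (hlamα : lam < α)
    {u : Finset (Fin d)} (hu : u.Nonempty) :
    korThreshold d p τ α γ lam ≤ (γ u)⁻¹ * (p : ℝ) ^ α := by
  obtain ⟨hτ0, hτ1⟩ := hτ
  have hp1 : (1 : ℝ) ≤ p := by exact_mod_cast hp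
  have hγu := hγ u hu
  have hγ'u : 0 < γ u ^ (1 / lam) := by positivity
  have hV := le_Vd (γ := fun v => γ v ^ (1 / lam)) ((one_lt_div hlam).2 hlamα)
    (fun v hv => (Real.rpow_pos_of_pos (hγ v hv) _).le) hu
  have hT : (1 - τ) * ((p : ℝ) - 1) / (2 * Vd d (α / lam) (fun u => γ u ^ (1 / lam)))
      ≤ p / γ u ^ (1 / lam) :=
    div_le_div₀ (by positivity) (by nlinarith) hγ'u (by linarith)
  calc korThreshold d p τ α γ lam ≤ (p / γ u ^ (1 / lam)) ^ lam :=
        Real.rpow_le_rpow (div_nonneg (by nlinarith) (by linarith)) hT hlam.le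
    _ = (γ u)⁻¹ * (p : ℝ) ^ lam := by
        rw [Real.div_rpow (by positivity) hγ'u.le, ← Real.rpow_mul hγu.le,
          one_div_mul_cancel hlam.ne', Real.rpow_one, div_eq_inv_mul]
    _ ≤ (γ u)⁻¹ * (p : ℝ) ^ α := by gcongr

lemma card_filter_rKor_lt_korThreshold_le (hd : 0 < d) (hp : 1 ≤ p) (hτ : τ ≤ 1)
    (hγ : ∀ u : Finset (Fin d), u.Nonempty → 0 < γ u) (hlam : 0 < lam) (hlamα : lam < α)
    (s : Finset ℤ) :
    (#((Fintype.piFinset fun _ : Fin d => s).filter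
      fun h => h ≠ 0 ∧ rKor d α γ h < korThreshold d p τ α γ lam) : ℝ)
      ≤ (1 - τ) * ((p : ℝ) - 1) / 2 := by
  set V := Vd d (α / lam) (fun u => γ u ^ (1 / lam))
  have hV : 0 < V := (Real.rpow_pos_of_pos (hγ {⟨0, hd⟩} (singleton_nonempty _)) _).trans_le
    (le_Vd ((one_lt_div hlam).2 hlamα) (fun v hv => (Real.rpow_pos_of_pos (hγ v hv) _).le)
      (singleton_nonempty _))
  have hp1 : (1 : ℝ) ≤ p := by exact_mod_cast hp
  have hT : 0 ≤ (1 - τ) * ((p : ℝ) - 1) / (2 * V) :=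
    div_nonneg (mul_nonneg (by linarith) (by linarith)) (by positivity)
  calc _ ≤ (1 - τ) * ((p : ℝ) - 1) / (2 * V) * V := (card_filter_rKor_lt_le hγ hlam hT _).trans
        (mul_le_mul_of_nonneg_left (sum_inv_rKor_rpow_le_Vd hlam hlamα hγ s) hT)
    _ = (1 - τ) * ((p : ℝ) - 1) / 2 := by field_simp

lemma card_genSet_sdiff_goodGenSet_korThreshold_le (hd : 0 < d) (hp : p.Prime)
    (hτ : τ ∈ Set.Icc (0 : ℝ) 1) (hγ : ∀ u : Finset (Fin d), u.Nonempty → 0 < γ u ∧ γ u ≤ 1)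
    (hlam : 0 < lam) (hlamα : lam < α) :
    (#(genSet d p \ goodGenSet d p α γ (korThreshold d p τ α γ lam)) : ℝ)
      ≤ (1 - τ) / 2 * ((p : ℝ) - 1) ^ d := by
  have hγ0 : ∀ u : Finset (Fin d), u.Nonempty → 0 < γ u := fun u hu => (hγ u hu).1
  have hα : 0 < α := hlam.trans hlamα
  set t := korThreshold d p τ α γ lam
  set box := Fintype.piFinset fun _ : Fin d => Icc (-(⌈t ^ (1 / α)⌉₊ : ℤ)) ⌈t ^ (1 / α)⌉₊
  set H := box.filter fun h => h ≠ 0 ∧ rKor d α γ h < t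
  have hH : ∀ h, h ≠ 0 → rKor d α γ h < t → h ∈ H := fun h hh hr =>
    mem_filter.2 ⟨Fintype.mem_piFinset.2 (mem_Icc_of_rKor_lt hα hγ hr), hh, hr⟩
  have hndvd : ∀ h ∈ H, ∃ j, ¬ (p : ℤ) ∣ h j := fun h hh =>
    have ⟨hh0, hr⟩ := (mem_filter.1 hh).2
    exists_not_dvd_of_rKor_lt hα.le hγ0 hh0
      (hr.trans_le (korThreshold_le_inv_mul_rpow hp.one_le hτ hγ0 hlam hlamα
        (suppF_nonempty hh0)))
  have hcast : ((p - 1 : ℕ) : ℝ) = (p : ℝ) - 1 := by rw [Nat.cast_sub hp.one_le, Nat.cast_one]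
  calc _ ≤ (#H : ℝ) * ((p : ℝ) - 1) ^ (d - 1) := by
        rw [← hcast]; exact_mod_cast card_genSet_sdiff_goodGenSet_le hp hH hndvd
    _ ≤ (1 - τ) * ((p : ℝ) - 1) / 2 * ((p : ℝ) - 1) ^ (d - 1) := by
        gcongr
        · rw [← hcast]; positivity
        · exact card_filter_rKor_lt_korThreshold_le hd hp.one_le hτ.2 hγ0 hlam hlamα _
    _ = (1 - τ) / 2 * ((p : ℝ) - 1) ^ d := by
        rw [← mul_pow_sub_one hd.ne' ((p : ℝ) - 1)]; ring

theorem card_goodGenSet_korThreshold (hp : p.Prime) (hτ : τ ∈ Set.Icc (0 : ℝ) 1)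
    (hγ : ∀ u : Finset (Fin d), u.Nonempty → 0 < γ u ∧ γ u ≤ 1) (hlam : 0 < lam)
    (hlamα : lam < α) :
    ⌈τ * ((p : ℝ) - 1) ^ d⌉₊ ≤ #(goodGenSet d p α γ (korThreshold d p τ α γ lam)) := by
  set G := goodGenSet d p α γ (korThreshold d p τ α γ lam)
  rcases Nat.eq_zero_or_pos d with hd0 | hd
  · have hall : genSet d p ⊆ G :=
      fun z hz => mem_filter.2 ⟨hz, fun h hh => absurd (funext fun j => absurd j.2 (by omega)) hh.1⟩
    refine le_trans ?_ (card_le_card hall)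
    rw [card_genSet, hd0, pow_zero, pow_zero, mul_one, Nat.ceil_le, Nat.cast_one]
    exact hτ.2
  have hsplit : (#(genSet d p \ G) : ℝ) + #G = ((p : ℝ) - 1) ^ d := by
    rw [← Nat.cast_one, ← Nat.cast_sub hp.one_le, ← Nat.cast_pow, ← card_genSet]
    exact_mod_cast card_sdiff_add_card_eq_card (filter_subset _ _)
  have hp1 : (0 : ℝ) ≤ (p : ℝ) - 1 := by
    rw [sub_nonneg, Nat.one_le_cast]; exact hp.one_le
  rw [Nat.ceil_le]
  nlinarith [hτ.2, pow_nonneg hp1 d,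
    card_genSet_sdiff_goodGenSet_korThreshold_le hd hp hτ hγ hlam hlamα]

end Threshold

/-- a large set of generating vectors whose nonzero dual lattice
points all have a large Korobov weight. -/
theorem stmt_16 (p d : ℕ) (hp : p.Prime) (τ α : ℝ) (hτ : τ ∈ Set.Ioo (0 : ℝ) 1)
    (hα : 1 / 2 < α) (γ : Finset (Fin d) → ℝ)
    (hγ : ∀ u : Finset (Fin d), u.Nonempty → 0 < γ u ∧ γ u ≤ 1) :
    ∃ Z : Finset (Fin d → ℤ), Z ⊆ genSet d p ∧
      ⌈τ * ((p : ℝ) - 1) ^ d⌉₊ ≤ Z.card ∧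
      ∀ z ∈ Z, ∀ lam ∈ Set.Ico (1 / 2 : ℝ) α, ∀ h : Fin d → ℤ, h ≠ 0 →
        (p : ℤ) ∣ ∑ j, h j * z j →
        ((1 - τ) * ((p : ℝ) - 1) / (2 * Vd d (α / lam) (fun u => γ u ^ (1 / lam)))) ^ lam ≤
          rKor d α γ h := by
  let F : ℝ → Finset (Fin d → ℤ) := fun lam => goodGenSet d p α γ (korThreshold d p τ α γ lam)
  have hchain : ∀ l l', F l ⊆ F l' ∨ F l' ⊆ F l := fun l l' =>
    (le_total _ _).symm.imp goodGenSet_anti goodGenSet_anti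
  obtain ⟨lam₀, hlam₀, hmin⟩ :=
    exists_forall_subset_of_total hchain (s := Set.Ico (1 / 2) α) ⟨1 / 2, le_rfl, hα⟩
  refine ⟨F lam₀, filter_subset _ _,
    card_goodGenSet_korThreshold hp (Set.Ioo_subset_Icc_self hτ) hγ (by linarith [hlam₀.1])
      hlam₀.2, ?_⟩
  intro z hz lam hlam h hh hdvd
  exact (mem_filter.1 (hmin lam hlam hz)).2 h ⟨hh, hdvd⟩

end
end
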